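/- Let (T, M) be a local domain with residue field k and residue map π : T → k, and let D be an integral domain with fraction field k, viewed as a subring of k. Let A := D ×_k T = π⁻¹(D). If P is a prime ideal of A with P ⊆ M, and Q is the unique prime ideal of T satisfying Q ∩ A = P, then the localizations A_P and T_Q coincide as subrings of the common fraction field of A and T; equivalently, T_Q together with the inclusion A → T_Q is the localization of A at the prime P. -/

import Mathlib

/-!
Every `x ∈ T` can be moved into `A = π⁻¹(D)` by a multiplier `u ∈ A` with `π u ≠ 0`: write
`π x = p / q` with `p, q ∈ D` and lift `q` to `u`. Such a `u` avoids `M`, hence every prime of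
`T`. So numerators and denominators of fractions in `T_Q` can be cleared into `A` without leaving
`A \ P`, which makes `T_Q` the localization of `A` at `P = Q ∩ A`.
-/

theorem Subring.isLocalization_comap_primeCompl_of_forall_exists_mul_mem {T : Type*}
    [CommRing T] (S : Subring T) (Q : Ideal T) [Q.IsPrime]
    (h : ∀ x : T, ∃ s ∈ S, s ∉ Q ∧ s * x ∈ S)
    (TQ : Type*) [CommRing TQ] [Algebra T TQ] [IsLocalization.AtPrime TQ Q] :
    @IsLocalization S _ (Q.comap S.subtype).primeCompl TQ _
      ((algebraMap T TQ).comp S.subtype).toAlgebra := by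
  let : Algebra S TQ := ((algebraMap T TQ).comp S.subtype).toAlgebra
  refine (isLocalization_iff _ _).2 ⟨?_, ?_, ?_⟩
  · rintro ⟨a, ha⟩
    exact IsLocalization.map_units TQ (⟨a, ha⟩ : Q.primeCompl)
  · intro z
    obtain ⟨⟨x, t, ht⟩, hz⟩ := IsLocalization.surj Q.primeCompl z
    obtain ⟨s, hs, hsQ, hsx⟩ := h x
    obtain ⟨s', hs', hs'Q, hs't⟩ := h t
    have hden : s * (s' * t) ∉ Q := by
      simp only [Ideal.IsPrime.mul_mem_iff_mem_or_mem, not_or]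
      exact ⟨hsQ, hs'Q, ht⟩
    refine ⟨⟨⟨s' * (s * x), S.mul_mem hs' hsx⟩, ⟨⟨s * (s' * t), S.mul_mem hs hs't⟩, hden⟩⟩, ?_⟩
    change z * algebraMap T TQ (s * (s' * t)) = algebraMap T TQ (s' * (s * x))
    simp only [map_mul] at hz ⊢
    rw [← hz]
    ring
  · intro x y hxy
    obtain ⟨⟨c, hcQ⟩, hc⟩ := IsLocalization.exists_of_eq (M := Q.primeCompl) hxy
    obtain ⟨s, -, hsQ, hsc⟩ := h c
    have hscQ : s * c ∉ Q := fun hmem => (‹Q.IsPrime›.mem_or_mem hmem).elim hsQ hcQ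
    refine ⟨⟨⟨s * c, hsc⟩, hscQ⟩, Subtype.ext ?_⟩
    change s * c * x = s * c * y
    rw [mul_assoc, mul_assoc]
    exact congrArg (s * ·) hc

theorem Subring.exists_mem_comap_mul_mem_comap {T k : Type*} [CommRing T] [Field k]
    {π : T →+* k} (hπ : Function.Surjective π) (D : Subring k) [IsFractionRing D k] (x : T) :
    ∃ u ∈ D.comap π, π u ≠ 0 ∧ u * x ∈ D.comap π := by
  obtain ⟨⟨p, q, hq⟩, hpq⟩ := IsLocalization.surj (nonZeroDivisors D) (π x)
  obtain ⟨u, hu⟩ := hπ q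
  refine ⟨u, by simp [hu], by simpa [hu] using nonZeroDivisors.coe_ne_zero ⟨q, hq⟩, ?_⟩
  change π (u * x) ∈ D
  rw [map_mul, hu, mul_comm]
  exact hpq ▸ p.2

theorem stmt_4 {T k : Type*} [CommRing T] [IsLocalRing T] [Field k]
    (π : T →+* k) (hπ : Function.Surjective π)
    (D : Subring k) [IsFractionRing D k]
    (P : Ideal (D.comap π)) [P.IsPrime]
    (Q : Ideal T) [Q.IsPrime] (hQ : Q.comap (D.comap π).subtype = P)
    (TQ : Type*) [CommRing TQ] [Algebra T TQ] [IsLocalization.AtPrime TQ Q] :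
    @IsLocalization (D.comap π) _ P.primeCompl TQ _
      ((algebraMap T TQ).comp (D.comap π).subtype).toAlgebra := by
  have hQ_le_ker : Q ≤ RingHom.ker π := by
    rw [IsLocalRing.eq_maximalIdeal (RingHom.ker_isMaximal_of_surjective π hπ)]
    exact IsLocalRing.le_maximalIdeal ‹Q.IsPrime›.ne_top
  subst hQ
  refine (D.comap π).isLocalization_comap_primeCompl_of_forall_exists_mul_mem Q (fun x => ?_) TQ
  obtain ⟨u, hu, hu0, hux⟩ := D.exists_mem_comap_mul_mem_comap hπ x
  exact ⟨u, hu, fun huQ => hu0 (hQ_le_ker huQ), hux⟩
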